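/- arXiv:1908.11134 — 7 statements merged into one kernel-verified Lean document; each statement's English description precedes it below -/
import Mathlib

section
/- Let a, b, c be real numbers with sinh(b)·sinh(c) ≠ 0, and define coshα := (cosh(b)·cosh(c) − cosh(a)) / (sinh(b)·sinh(c)) and s := (a+b+c)/2. Then coshα² − 1 = −4·sinh(s)·sinh(s−a)·sinh(s−b)·sinh(s−c) / (sinh(b)²·sinh(c)²). -/
open Real

/-- Hyperbolic Heron-type identity:
`cosh²α − 1 = −4 sinh s sinh(s−a) sinh(s−b) sinh(s−c) / (sinh²b sinh²c)`. -/
theorem stmt_8 (a b c : ℝ) (h : Real.sinh b * Real.sinh c ≠ 0)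
    (coshα : ℝ)
    (hα : coshα = (Real.cosh b * Real.cosh c - Real.cosh a) / (Real.sinh b * Real.sinh c))
    (s : ℝ) (hs : s = (a + b + c) / 2) :
    coshα ^ 2 - 1
      = -4 * Real.sinh s * Real.sinh (s - a) * Real.sinh (s - b) * Real.sinh (s - c)
          / (Real.sinh b ^ 2 * Real.sinh c ^ 2) := by
  have hb : Real.sinh b ≠ 0 := fun hb => h (by rw [hb]; ring)
  have hc : Real.sinh c ≠ 0 := fun hc => h (by rw [hc]; ring)
  subst hα hs
  set x := Real.exp (a / 2) with hx
  set y := Real.exp (b / 2) with hy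
  set z := Real.exp (c / 2) with hz
  have hx0 : x ≠ 0 := (Real.exp_pos _).ne'
  have hy0 : y ≠ 0 := (Real.exp_pos _).ne'
  have hz0 : z ≠ 0 := (Real.exp_pos _).ne'
  have ea : Real.exp a = x ^ 2 := by rw [hx, sq, ← Real.exp_add]; norm_num
  have eb : Real.exp b = y ^ 2 := by rw [hy, sq, ← Real.exp_add]; norm_num
  have ec : Real.exp c = z ^ 2 := by rw [hz, sq, ← Real.exp_add]; norm_num
  have es : Real.exp ((a + b + c) / 2) = x * y * z := by
    rw [hx, hy, hz, ← Real.exp_add, ← Real.exp_add]; ring_nf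
  have esa : Real.exp ((a + b + c) / 2 - a) = y * z / x := by
    rw [Real.exp_sub, es, ea]; field_simp
  have esb : Real.exp ((a + b + c) / 2 - b) = x * z / y := by
    rw [Real.exp_sub, es, eb]; field_simp
  have esc : Real.exp ((a + b + c) / 2 - c) = x * y / z := by
    rw [Real.exp_sub, es, ec]; field_simp
  have ca : Real.cosh a = (x ^ 4 + 1) / (2 * x ^ 2) := by
    rw [Real.cosh_eq, ea, Real.exp_neg, ea]; field_simp
  have cb : Real.cosh b = (y ^ 4 + 1) / (2 * y ^ 2) := by
    rw [Real.cosh_eq, eb, Real.exp_neg, eb]; field_simp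
  have cc : Real.cosh c = (z ^ 4 + 1) / (2 * z ^ 2) := by
    rw [Real.cosh_eq, ec, Real.exp_neg, ec]; field_simp
  have sb : Real.sinh b = (y ^ 4 - 1) / (2 * y ^ 2) := by
    rw [Real.sinh_eq, eb, Real.exp_neg, eb]; field_simp
  have sc : Real.sinh c = (z ^ 4 - 1) / (2 * z ^ 2) := by
    rw [Real.sinh_eq, ec, Real.exp_neg, ec]; field_simp
  have ss : Real.sinh ((a + b + c) / 2) = ((x * y * z) ^ 2 - 1) / (2 * (x * y * z)) := by
    rw [Real.sinh_eq, es, Real.exp_neg, es]; field_simp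
  have ssa : Real.sinh ((a + b + c) / 2 - a) = ((y * z) ^ 2 - x ^ 2) / (2 * (x * y * z)) := by
    rw [Real.sinh_eq, esa, Real.exp_neg, esa]; field_simp
  have ssb : Real.sinh ((a + b + c) / 2 - b) = ((x * z) ^ 2 - y ^ 2) / (2 * (x * y * z)) := by
    rw [Real.sinh_eq, esb, Real.exp_neg, esb]; field_simp
  have ssc : Real.sinh ((a + b + c) / 2 - c) = ((x * y) ^ 2 - z ^ 2) / (2 * (x * y * z)) := by
    rw [Real.sinh_eq, esc, Real.exp_neg, esc]; field_simp
  have hy4 : y ^ 4 - 1 ≠ 0 := by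
    intro h'; apply hb; rw [sb, h', zero_div]
  have hz4 : z ^ 4 - 1 ≠ 0 := by
    intro h'; apply hc; rw [sc, h', zero_div]
  rw [ca, cb, cc, sb, sc, ss, ssa, ssb, ssc]
  field_simp
  ring
end

section
/- Let c₁, c₂, c₃, s₁, s₂, s₃ be real numbers with s_j² = c_j² − 1 for j = 1, 2, 3. With indices taken modulo 3, define for each j: g_j = c_j/(c_j + c_{j+1}c_{j+2}), h_j = c_j/(c_j − c_{j+1}c_{j+2}), n_j = c_j²·(c_j²·(2c_{j+1}²c_{j+2}² − c_{j+1}² − c_{j+2}²) − c_{j+1}²s_{j+1}² − c_{j+2}²s_{j+2}²), o_j = −s_j²·(1 + c_j² − c_{j+1}² − c_{j+2}²). Set r = c₁c₂c₃, s = (c₁+c₂c₃)(c₂+c₃c₁)(c₃+c₁c₂)(1+2r−c₁²−c₂²−c₃²), t = (c₁−c₂c₃)(c₂−c₃c₁)(c₃−c₁c₂)(1−2r−c₁²−c₂²−c₃²). Then, assuming the denominators c_j ± c_{j+1}c_{j+2} are nonzero, for every j: r·o_j + n_j = s·g_j and r·o_j − n_j = t·h_j. -/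
/-- Identities `r·o + n = s·g` and `r·o − n = t·h` expressing that the pseudo-orthocenter,
Hart-circle center, pseudo-centroid and circumcenter form a harmonic range. -/
theorem stmt_11 (c s : Fin 3 → ℝ) (hcs : ∀ j : Fin 3, (s j) ^ 2 = (c j) ^ 2 - 1)
    (hden₁ : ∀ j : Fin 3, c j + c (j + 1) * c (j + 2) ≠ 0)
    (hden₂ : ∀ j : Fin 3, c j - c (j + 1) * c (j + 2) ≠ 0)
    (g h n o : Fin 3 → ℝ)
    (hg : ∀ j : Fin 3, g j = c j / (c j + c (j + 1) * c (j + 2)))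
    (hh : ∀ j : Fin 3, h j = c j / (c j - c (j + 1) * c (j + 2)))
    (hn : ∀ j : Fin 3, n j = (c j) ^ 2 *
      ((c j) ^ 2 * (2 * (c (j + 1)) ^ 2 * (c (j + 2)) ^ 2 - (c (j + 1)) ^ 2 - (c (j + 2)) ^ 2)
        - (c (j + 1)) ^ 2 * (s (j + 1)) ^ 2 - (c (j + 2)) ^ 2 * (s (j + 2)) ^ 2))
    (ho : ∀ j : Fin 3, o j = -(s j) ^ 2 * (1 + (c j) ^ 2 - (c (j + 1)) ^ 2 - (c (j + 2)) ^ 2))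
    (r S t : ℝ)
    (hr : r = c 0 * c 1 * c 2)
    (hS : S = (c 0 + c 1 * c 2) * (c 1 + c 2 * c 0) * (c 2 + c 0 * c 1)
            * (1 + 2 * r - (c 0) ^ 2 - (c 1) ^ 2 - (c 2) ^ 2))
    (ht : t = (c 0 - c 1 * c 2) * (c 1 - c 2 * c 0) * (c 2 - c 0 * c 1)
            * (1 - 2 * r - (c 0) ^ 2 - (c 1) ^ 2 - (c 2) ^ 2)) :
    ∀ j : Fin 3, r * o j + n j = S * g j ∧ r * o j - n j = t * h j := by
  have K : ∀ a b d : Fin 3, a + 1 = b → a + 2 = d →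
      r = c a * c b * c d →
      S = (c a + c b * c d) * (c b + c d * c a) * (c d + c a * c b)
            * (1 + 2 * r - (c a) ^ 2 - (c b) ^ 2 - (c d) ^ 2) →
      t = (c a - c b * c d) * (c b - c d * c a) * (c d - c a * c b)
            * (1 - 2 * r - (c a) ^ 2 - (c b) ^ 2 - (c d) ^ 2) →
      (r * o a + n a = S * g a ∧ r * o a - n a = t * h a) := by
    intro a b d hab had hrr hSS htt
    have da1 : c a + c b * c d ≠ 0 := by have := hden₁ a; rwa [hab, had] at this
    have da2 : c a - c b * c d ≠ 0 := by have := hden₂ a; rwa [hab, had] at this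
    rw [hg a, hh a, hn a, ho a, hab, had, hcs a, hcs b, hcs d, hSS, htt, hrr]
    constructor
    · field_simp
      ring
    · field_simp
      ring
  intro j
  fin_cases j
  · exact K 0 1 2 rfl rfl hr hS ht
  · exact K 1 2 0 rfl rfl (by rw [hr]; ring) (by rw [hS]; ring) (by rw [ht]; ring)
  · exact K 2 0 1 rfl rfl (by rw [hr]; ring) (by rw [hS]; ring) (by rw [ht]; ring)
end

section
/- Let P = (p₁,p₂,p₃), Q = (q₁,q₂,q₃) ∈ ℝ³ and define W ∈ ℝ³ by W_j = q_j·(2·p_j·q_{j+1}·q_{j+2} + q_j·(p_{j+1}·q_{j+2} + p_{j+2}·q_{j+1})) for j = 1,2,3 with indices mod 3. Then the determinant of the 3×3 matrix with rows P, Q, W vanishes; i.e., the projective point W lies on the line joining P and Q. -/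
open Matrix

/-- The pole `W` of the tripolar of `Q` with respect to the bicevian conic of `P` and `Q`
lies on the line joining `P` and `Q`. -/
theorem stmt_13 (P Q : Fin 3 → ℝ) (W : Fin 3 → ℝ)
    (hW : ∀ j : Fin 3,
      W j = Q j * (2 * P j * Q (j + 1) * Q (j + 2)
              + Q j * (P (j + 1) * Q (j + 2) + P (j + 2) * Q (j + 1)))) :
    Matrix.det !![P 0, P 1, P 2; Q 0, Q 1, Q 2; W 0, W 1, W 2] = 0 := by
  have h0 := hW 0
  have h1 := hW 1
  have h2 := hW 2
  norm_num [Fin.isValue, show (0:Fin 3)+1 = 1 from rfl, show (0:Fin 3)+2 = 2 from rfl,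
    show (1:Fin 3)+1 = 2 from rfl, show (1:Fin 3)+2 = 0 from rfl,
    show (2:Fin 3)+1 = 0 from rfl, show (2:Fin 3)+2 = 1 from rfl] at h0 h1 h2
  rw [Matrix.det_fin_three, h0, h1, h2]
  simp [Matrix.cons_val_zero, Matrix.cons_val_one]
  ring
end

section
/- Let D be a symmetric 3×3 real matrix, s ∈ ℝ³, and x, y, z ∈ ℝ. Let e₁, e₂, e₃ be the standard basis of ℝ³ and set p = s + x·(D e₁), q = s + y·(D e₂), r = s + z·(D e₃). Then the three vectors ((q ×₃ r)ᵀD) ×₃ e₁, ((r ×₃ p)ᵀD) ×₃ e₂, ((p ×₃ q)ᵀD) ×₃ e₃ are linearly dependent (the determinant of the 3×3 matrix with these rows vanishes). -/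
open Matrix

set_option maxHeartbeats 2000000 in
/-- If a triple `PQR` is orthologic to the reference triangle with center `S`, then the
perpendiculars from the vertices to the opposite sides of `PQR` are concurrent. -/
theorem stmt_15 (D : Matrix (Fin 3) (Fin 3) ℝ) (hD : D.IsSymm)
    (s : Fin 3 → ℝ) (x y z : ℝ)
    (p q r : Fin 3 → ℝ)
    (hp : p = s + x • D.mulVec ![1, 0, 0])
    (hq : q = s + y • D.mulVec ![0, 1, 0])
    (hr : r = s + z • D.mulVec ![0, 0, 1])
    (w₁ w₂ w₃ : Fin 3 → ℝ)
    (hw₁ : w₁ = crossProduct (Matrix.vecMul (crossProduct q r) D) ![1, 0, 0])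
    (hw₂ : w₂ = crossProduct (Matrix.vecMul (crossProduct r p) D) ![0, 1, 0])
    (hw₃ : w₃ = crossProduct (Matrix.vecMul (crossProduct p q) D) ![0, 0, 1]) :
    Matrix.det !![w₁ 0, w₁ 1, w₁ 2; w₂ 0, w₂ 1, w₂ 2; w₃ 0, w₃ 1, w₃ 2] = 0 := by
  have h01 : D 0 1 = D 1 0 := by rw [Matrix.IsSymm] at hD; exact congrFun (congrFun hD.symm 0) 1
  have h02 : D 0 2 = D 2 0 := by rw [Matrix.IsSymm] at hD; exact congrFun (congrFun hD.symm 0) 2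
  have h12 : D 1 2 = D 2 1 := by rw [Matrix.IsSymm] at hD; exact congrFun (congrFun hD.symm 1) 2
  subst hp hq hr hw₁ hw₂ hw₃
  simp only [crossProduct, Matrix.mulVec, Matrix.vecMul, dotProduct,
    Fin.sum_univ_three, Matrix.det_fin_three, Matrix.cons_val_zero, Matrix.cons_val_one,
    Matrix.head_cons, Matrix.cons_val_two, Matrix.tail_cons, Pi.add_apply, Pi.smul_apply,
    smul_eq_mul, LinearMap.mk₂_apply, Matrix.of_apply, Matrix.cons_val', Matrix.empty_val',
    Matrix.cons_val_fin_one, Matrix.head_fin_const]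
  ring_nf
end

section
/- Let M be a symmetric 3×3 real matrix with entries m_{ij} such that m₂₃, m₃₁, m₁₂ are all nonzero and the three quantities a := m₁₁m₂₃ − m₃₁m₁₂, b := m₂₂m₃₁ − m₁₂m₂₃, c := m₃₃m₁₂ − m₂₃m₃₁ are nonzero. Let M# be the adjugate of M, and let P_A, P_B, P_C be the rows 1, 2, 3 of M#, i.e., the poles of the lines B∨C, C∨A, A∨B with respect to the quadratic form of M. Then the three lines A∨P_A, B∨P_B, C∨P_C (where A=(1,0,0), B=(0,1,0), C=(0,0,1)) all pass through the point W = (bc, ca, ab), i.e., W = [1/a : 1/b : 1/c]. -/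
open Matrix

/-- The poles of the sidelines with respect to a symmetric matrix `M` form a triple
perspective to the reference triangle, with perspector `W = [1/a : 1/b : 1/c]`. -/
theorem stmt_16 (M : Matrix (Fin 3) (Fin 3) ℝ) (hM : M.IsSymm)
    (h23 : M 1 2 ≠ 0) (h31 : M 2 0 ≠ 0) (h12 : M 0 1 ≠ 0)
    (a b c : ℝ)
    (ha' : a = M 0 0 * M 1 2 - M 2 0 * M 0 1)
    (hb' : b = M 1 1 * M 2 0 - M 0 1 * M 1 2)
    (hc' : c = M 2 2 * M 0 1 - M 1 2 * M 2 0)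
    (ha : a ≠ 0) (hb : b ≠ 0) (hc : c ≠ 0)
    (PA PB PC : Fin 3 → ℝ)
    (hPA : PA = fun j => M.adjugate 0 j)
    (hPB : PB = fun j => M.adjugate 1 j)
    (hPC : PC = fun j => M.adjugate 2 j)
    (W : Fin 3 → ℝ) (hW : W = ![b * c, c * a, a * b]) :
    Matrix.det !![(1 : ℝ), 0, 0; PA 0, PA 1, PA 2; W 0, W 1, W 2] = 0 ∧
    Matrix.det !![(0 : ℝ), 1, 0; PB 0, PB 1, PB 2; W 0, W 1, W 2] = 0 ∧
    Matrix.det !![(0 : ℝ), 0, 1; PC 0, PC 1, PC 2; W 0, W 1, W 2] = 0 := by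
  have h10 : M 1 0 = M 0 1 := (hM.apply 1 0).symm
  have h02 : M 0 2 = M 2 0 := (hM.apply 0 2).symm
  have h21 : M 2 1 = M 1 2 := (hM.apply 2 1).symm
  subst ha' hb' hc' hPA hPB hPC hW
  simp only [Matrix.adjugate_fin_three, Matrix.det_fin_three, Matrix.cons_val',
    Matrix.cons_val_zero, Matrix.cons_val_one, Matrix.head_cons, Matrix.of_apply,
    Matrix.empty_val', Matrix.cons_val_fin_one, Matrix.head_fin_const,
    Matrix.cons_val_two, Matrix.tail_cons, Matrix.head_fin_const]
  rw [h10, h02, h21]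
  refine ⟨by ring, by ring, by ring⟩
end

section
/- Let α, β, γ, k be real numbers and d₁₁, d₂₂, d₃₃ > 0 such that sinh(kα), sinh((1−k)α), sinh(kβ), sinh((1−k)β), sinh(kγ), sinh((1−k)γ) are all nonzero. Define R(k) := (√d₁₁·sinh(kα)/sinh((1−k)α), √d₂₂·sinh(kβ)/sinh((1−k)β), √d₃₃·sinh(kγ)/sinh((1−k)γ)), and define the isogonal conjugation ι(x₁,x₂,x₃) := (d₁₁·x₂x₃, d₂₂·x₃x₁, d₃₃·x₁x₂). Then ι(R(k)) is a nonzero scalar multiple of R(1−k); i.e., the isogonal conjugate of the Hofstadter k-point is the Hofstadter (1−k)-point. -/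
/-!
With `rᵢ = sinh(kθᵢ) / sinh((1 − k)θᵢ)`, the Hofstadter `k`-point is `(√dᵢᵢ rᵢ)` and the
`(1 − k)`-point is `(√dᵢᵢ / rᵢ)`. Since `(√dᵢᵢ)² = dᵢᵢ`, isogonal conjugation sends the first to
`√d₁₁ √d₂₂ √d₃₃ r₁ r₂ r₃ · (√dᵢᵢ / rᵢ)`.
-/

open Real

noncomputable def hofstadterRatio (k θ : ℝ) : ℝ :=
  sinh (k * θ) / sinh ((1 - k) * θ)

lemma hofstadterRatio_one_sub (k θ : ℝ) :
    hofstadterRatio (1 - k) θ = (hofstadterRatio k θ)⁻¹ := by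
  rw [hofstadterRatio, hofstadterRatio, sub_sub_cancel, inv_div]

lemma hofstadterRatio_ne_zero {k θ : ℝ} (h : sinh (k * θ) ≠ 0) (h' : sinh ((1 - k) * θ) ≠ 0) :
    hofstadterRatio k θ ≠ 0 :=
  div_ne_zero h h'

lemma isogonal_conj_scaled_eq_smul_inv {r₁ r₂ r₃ : ℝ} (c₁ c₂ c₃ : ℝ)
    (hr₁ : r₁ ≠ 0) (hr₂ : r₂ ≠ 0) (hr₃ : r₃ ≠ 0) :
    ![c₁ ^ 2 * (c₂ * r₂) * (c₃ * r₃), c₂ ^ 2 * (c₃ * r₃) * (c₁ * r₁),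
        c₃ ^ 2 * (c₁ * r₁) * (c₂ * r₂)] =
      (c₁ * c₂ * c₃ * (r₁ * r₂ * r₃)) • ![c₁ * r₁⁻¹, c₂ * r₂⁻¹, c₃ * r₃⁻¹] := by
  ext i
  fin_cases i <;> simp <;> field_simp

/-- The isogonal conjugate of the Hofstadter `k`-point is the Hofstadter `(1−k)`-point. -/
theorem stmt_17 (α β γ k : ℝ) (d₁₁ d₂₂ d₃₃ : ℝ)
    (hd₁ : 0 < d₁₁) (hd₂ : 0 < d₂₂) (hd₃ : 0 < d₃₃)
    (h1 : Real.sinh (k * α) ≠ 0) (h2 : Real.sinh ((1 - k) * α) ≠ 0)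
    (h3 : Real.sinh (k * β) ≠ 0) (h4 : Real.sinh ((1 - k) * β) ≠ 0)
    (h5 : Real.sinh (k * γ) ≠ 0) (h6 : Real.sinh ((1 - k) * γ) ≠ 0)
    (R : ℝ → Fin 3 → ℝ)
    (hR : ∀ t : ℝ, R t = ![Real.sqrt d₁₁ * Real.sinh (t * α) / Real.sinh ((1 - t) * α),
                           Real.sqrt d₂₂ * Real.sinh (t * β) / Real.sinh ((1 - t) * β),
                           Real.sqrt d₃₃ * Real.sinh (t * γ) / Real.sinh ((1 - t) * γ)])
    (ι : (Fin 3 → ℝ) → Fin 3 → ℝ)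
    (hι : ∀ v : Fin 3 → ℝ, ι v = ![d₁₁ * v 1 * v 2, d₂₂ * v 2 * v 0, d₃₃ * v 0 * v 1]) :
    ∃ μ : ℝ, μ ≠ 0 ∧ ι (R k) = μ • R (1 - k) := by
  have hR_ratio (t : ℝ) : R t = ![√d₁₁ * hofstadterRatio t α, √d₂₂ * hofstadterRatio t β,
      √d₃₃ * hofstadterRatio t γ] := by
    simp only [hR, hofstadterRatio, mul_div_assoc]
  have hα := hofstadterRatio_ne_zero h1 h2
  have hβ := hofstadterRatio_ne_zero h3 h4
  have hγ := hofstadterRatio_ne_zero h5 h6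
  refine ⟨√d₁₁ * √d₂₂ * √d₃₃ *
    (hofstadterRatio k α * hofstadterRatio k β * hofstadterRatio k γ), ?_, ?_⟩
  · have := sqrt_pos.mpr hd₁; have := sqrt_pos.mpr hd₂; have := sqrt_pos.mpr hd₃
    positivity
  · rw [hι, hR_ratio, hR_ratio, hofstadterRatio_one_sub, hofstadterRatio_one_sub,
      hofstadterRatio_one_sub, ← isogonal_conj_scaled_eq_smul_inv _ _ _ hα hβ hγ,
      sq_sqrt hd₁.le, sq_sqrt hd₂.le, sq_sqrt hd₃.le]
    simp
end

section
/- Let D be a symmetric 3×3 real matrix with entries d_{ij}. Define the vectors h := (d₃₁d₁₂, d₁₂d₂₃, d₂₃d₃₁), o := (d₁₁d₂₃, d₂₂d₃₁, d₃₃d₁₂), n := (d₁₁d₂₃ − 2d₁₂d₃₁, d₂₂d₃₁ − 2d₁₂d₂₃, d₃₃d₁₂ − 2d₂₃d₃₁), and h* := (d₁₁d₂₃ + 2d₃₁d₁₂, d₂₂d₃₁ + 2d₁₂d₂₃, d₃₃d₁₂ + 2d₂₃d₃₁). Then n = o − 2h and h* = o + 2h; consequently (if h and o are linearly independent) the four projective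 points H = [h], N⁺ = [n], O⁺ = [o], H* = [h*] are collinear and form a harmonic range, i.e., the cross-ratio of the parameters of H, N⁺, O⁺, H* on the pencil t ↦ [o + t·h] is (with parameters ∞, −2, 0, 2) equal to −1. -/
/-- The points `H, N⁺, O⁺, H*` on the orthoaxis: `n = o − 2h`, `h* = o + 2h`, so that
(for linearly independent `h, o`) they form a harmonic range with parameters
`∞, −2, 0, 2` on the pencil `t ↦ [o + t·h]`, of cross-ratio `−1`. -/
theorem stmt_18 (D : Matrix (Fin 3) (Fin 3) ℝ) (hD : D.IsSymm)
    (h o n hstar : Fin 3 → ℝ)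
    (hh : h = ![D 2 0 * D 0 1, D 0 1 * D 1 2, D 1 2 * D 2 0])
    (ho : o = ![D 0 0 * D 1 2, D 1 1 * D 2 0, D 2 2 * D 0 1])
    (hn : n = ![D 0 0 * D 1 2 - 2 * D 0 1 * D 2 0,
                D 1 1 * D 2 0 - 2 * D 0 1 * D 1 2,
                D 2 2 * D 0 1 - 2 * D 1 2 * D 2 0])
    (hhstar : hstar = ![D 0 0 * D 1 2 + 2 * D 2 0 * D 0 1,
                        D 1 1 * D 2 0 + 2 * D 0 1 * D 1 2,
                        D 2 2 * D 0 1 + 2 * D 1 2 * D 2 0]) :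
    n = o - (2 : ℝ) • h ∧ hstar = o + (2 : ℝ) • h ∧
    ((0 : ℝ) - (-2)) / ((0 : ℝ) - 2) = -1 := by
  subst hh ho hn hhstar
  refine ⟨?_, ?_, by norm_num⟩ <;>
  · funext i
    fin_cases i <;> simp <;> ring
end
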